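/- arXiv:2210.07715 — 9 statements merged into one kernel-verified Lean document; each statement's English description precedes it below -/
import Mathlib

section
/- Sufficiency direction of Theorem 1. Fix m, S and β with 0 < β ≤ 1, central features c1, c2 : F, and nonempty finite multisets X1, X2 over F. If c1 = c2, M(X1) = M(X2), and there exists a real q > 0 such that for every x ∈ M(X1), q · μ_{X1}(x) · exp(−β·S(c1, x)) = μ_{X2}(x) · exp(−β·S(c2, x)), then for every g : F → ℝ, h(g; c1, X1) = h(g; c2, X2). -/
namespace SAT

variable {F : Type*}

/-- Contractive weight: `w(c,x) = exp(m(c,x)) * exp(-β * S(c,x))`. -/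
noncomputable def cw (m S : F → F → ℝ) (β : ℝ) (c x : F) : ℝ :=
  Real.exp (m c x) * Real.exp (-β * S c x)

/-- Total contractive weight `W(c,X)` (sum with multiplicity). -/
noncomputable def cW (m S : F → F → ℝ) (β : ℝ) (c : F) (X : Multiset F) : ℝ :=
  (X.map (fun y => cw m S β c y)).sum

/-- Contractive aggregation `h(g;c,X) = Σ_{x∈X} (w(c,x)/W(c,X)) * g(x)`. -/
noncomputable def ch (m S : F → F → ℝ) (β : ℝ) (g : F → ℝ) (c : F) (X : Multiset F) : ℝ :=
  (X.map (fun x => cw m S β c x / cW m S β c X * g x)).sum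

theorem contractive_sufficiency [DecidableEq F]
    (m S : F → F → ℝ) (β : ℝ) (hβ0 : 0 < β) (hβ1 : β ≤ 1)
    (c1 c2 : F) (X1 X2 : Multiset F) (hX1 : X1 ≠ 0) (hX2 : X2 ≠ 0)
    (hc : c1 = c2) (hM : X1.toFinset = X2.toFinset)
    (hq : ∃ q : ℝ, 0 < q ∧ ∀ x ∈ X1.toFinset,
      q * (X1.count x : ℝ) * Real.exp (-β * S c1 x) =
        (X2.count x : ℝ) * Real.exp (-β * S c2 x)) :
    ∀ g : F → ℝ, ch m S β g c1 X1 = ch m S β g c2 X2 := by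
  subst hc
  obtain ⟨q, hq0, hqe⟩ := hq
  intro g
  have hkey : ∀ x ∈ X1.toFinset,
      (X2.count x : ℝ) * cw m S β c1 x = q * ((X1.count x : ℝ) * cw m S β c1 x) := by
    intro x hx
    have h := hqe x hx
    simp only [cw]
    calc (X2.count x : ℝ) * (Real.exp (m c1 x) * Real.exp (-β * S c1 x))
        = ((X2.count x : ℝ) * Real.exp (-β * S c1 x)) * Real.exp (m c1 x) := by ring
      _ = (q * (X1.count x : ℝ) * Real.exp (-β * S c1 x)) * Real.exp (m c1 x) := by rw [← h]
      _ = q * ((X1.count x : ℝ) * (Real.exp (m c1 x) * Real.exp (-β * S c1 x))) := by ring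
  have hWsum : ∀ (X : Multiset F),
      cW m S β c1 X = ∑ x ∈ X.toFinset, (X.count x : ℝ) * cw m S β c1 x := by
    intro X
    rw [cW, Finset.sum_multiset_map_count]
    simp [nsmul_eq_mul]
  have hW1pos : 0 < cW m S β c1 X1 := by
    rw [hWsum]
    obtain ⟨x, hx⟩ := Multiset.exists_mem_of_ne_zero hX1
    have hxF : x ∈ X1.toFinset := Multiset.mem_toFinset.mpr hx
    have hcwpos : ∀ y, 0 < cw m S β c1 y := fun y =>
      mul_pos (Real.exp_pos _) (Real.exp_pos _)
    refine Finset.sum_pos' (fun y _ => ?_) ⟨x, hxF, ?_⟩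
    · exact mul_nonneg (Nat.cast_nonneg _) (hcwpos y).le
    · have h1 : 0 < (X1.count x : ℝ) := by
        exact_mod_cast Nat.pos_of_ne_zero (by simpa [Multiset.count_pos] using
          (Multiset.count_pos.mpr hx).ne')
      exact mul_pos h1 (hcwpos x)
  have hW2 : cW m S β c1 X2 = q * cW m S β c1 X1 := by
    rw [hWsum, hWsum, ← hM, Finset.mul_sum]
    exact Finset.sum_congr rfl hkey
  have hchsum : ∀ (X : Multiset F),
      ch m S β g c1 X =
        ∑ x ∈ X.toFinset, (X.count x : ℝ) * (cw m S β c1 x / cW m S β c1 X * g x) := by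
    intro X
    rw [ch, Finset.sum_multiset_map_count]
    simp [nsmul_eq_mul]
  rw [hchsum, hchsum, ← hM, hW2]
  refine Finset.sum_congr rfl fun x hx => ?_
  calc (X1.count x : ℝ) * (cw m S β c1 x / cW m S β c1 X1 * g x)
      = ((X1.count x : ℝ) * cw m S β c1 x) / cW m S β c1 X1 * g x := by ring
    _ = (q * ((X1.count x : ℝ) * cw m S β c1 x)) / (q * cW m S β c1 X1) * g x := by
        rw [mul_div_mul_left _ _ (ne_of_gt hq0)]
    _ = ((X2.count x : ℝ) * cw m S β c1 x) / (q * cW m S β c1 X1) * g x := by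
        rw [← hkey x hx]
    _ = (X2.count x : ℝ) * (cw m S β c1 x / (q * cW m S β c1 X1) * g x) := by ring

end SAT
end

section
/- Sufficiency direction of Theorem 2. Fix m, S and β with 0 < β ≤ 1, central features c1, c2 : F, and nonempty finite multisets X1, X2 over F with strictly positive total subtractive weights W(c1,X1) and W(c2,X2). If c1 = c2, M(X1) = M(X2), and there exists a real q > 0 such that for every x ∈ M(X1), q · μ_{X1}(x) · (E(c1,X1) − β·exp(S(c1,x))) = μ_{X2}(x) · (E(c2,X2) − β·exp(S(c2,x))), then for every g : F → ℝ, h(g; c1, X1) = h(g; c2, X2). -/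
namespace SAT

variable {F : Type*}

/-- `E(c,X) = Σ_{y∈X} exp(S(c,y))` (sum with multiplicity). -/
noncomputable def sE (S : F → F → ℝ) (c : F) (X : Multiset F) : ℝ :=
  (X.map (fun y => Real.exp (S c y))).sum

/-- Subtractive weight: `w(c,x;X) = exp(m(c,x)) * (1 - β * exp(S(c,x)) / E(c,X))`. -/
noncomputable def sw (m S : F → F → ℝ) (β : ℝ) (c : F) (X : Multiset F) (x : F) : ℝ :=
  Real.exp (m c x) * (1 - β * Real.exp (S c x) / sE S c X)

/-- Total subtractive weight `W(c,X)` (sum with multiplicity). -/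
noncomputable def sW (m S : F → F → ℝ) (β : ℝ) (c : F) (X : Multiset F) : ℝ :=
  (X.map (fun y => sw m S β c X y)).sum

/-- Subtractive aggregation `h(g;c,X) = Σ_{x∈X} (w(c,x;X)/W(c,X)) * g(x)`. -/
noncomputable def sh (m S : F → F → ℝ) (β : ℝ) (g : F → ℝ) (c : F) (X : Multiset F) : ℝ :=
  (X.map (fun x => sw m S β c X x / sW m S β c X * g x)).sum

theorem subtractive_sufficiency [DecidableEq F]
    (m S : F → F → ℝ) (β : ℝ) (hβ0 : 0 < β) (hβ1 : β ≤ 1)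
    (c1 c2 : F) (X1 X2 : Multiset F) (hX1 : X1 ≠ 0) (hX2 : X2 ≠ 0)
    (hW1 : 0 < sW m S β c1 X1) (hW2 : 0 < sW m S β c2 X2)
    (hc : c1 = c2) (hM : X1.toFinset = X2.toFinset)
    (hq : ∃ q : ℝ, 0 < q ∧ ∀ x ∈ X1.toFinset,
      q * (X1.count x : ℝ) * (sE S c1 X1 - β * Real.exp (S c1 x)) =
        (X2.count x : ℝ) * (sE S c2 X2 - β * Real.exp (S c2 x))) :
    ∀ g : F → ℝ, sh m S β g c1 X1 = sh m S β g c2 X2 := by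
  subst hc
  obtain ⟨q, hq0, hqe⟩ := hq
  have hEpos : ∀ X : Multiset F, X ≠ 0 → 0 < sE S c1 X := by
    intro X hX
    unfold sE
    rw [Finset.sum_multiset_map_count]
    apply Finset.sum_pos
    · intro x hx
      have hc : 0 < X.count x := Multiset.count_pos.mpr (Multiset.mem_toFinset.mp hx)
      have := Real.exp_pos (S c1 x)
      positivity
    · exact Multiset.toFinset_nonempty.mpr (by simpa using hX)
  have hE1 : 0 < sE S c1 X1 := hEpos X1 hX1
  have hE2 : 0 < sE S c1 X2 := hEpos X2 hX2
  set k := q * sE S c1 X1 / sE S c1 X2 with hk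
  have hk0 : 0 < k := by positivity
  have hswrep : ∀ (X : Multiset F) (x : F), 0 < sE S c1 X →
      sw m S β c1 X x =
        Real.exp (m c1 x) * (sE S c1 X - β * Real.exp (S c1 x)) / sE S c1 X := by
    intro X x hE
    unfold sw
    field_simp
  have key : ∀ x ∈ X1.toFinset,
      (X2.count x : ℝ) * sw m S β c1 X2 x =
        k * ((X1.count x : ℝ) * sw m S β c1 X1 x) := by
    intro x hx
    have h := hqe x hx
    rw [hswrep X1 x hE1, hswrep X2 x hE2, hk]
    have h2 : (X2.count x : ℝ) * (sE S c1 X2 - β * Real.exp (S c1 x)) =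
        q * (X1.count x : ℝ) * (sE S c1 X1 - β * Real.exp (S c1 x)) := h.symm
    field_simp
    linear_combination h2
  have hW : sW m S β c1 X2 = k * sW m S β c1 X1 := by
    unfold sW
    rw [Finset.sum_multiset_map_count, Finset.sum_multiset_map_count, ← hM,
      Finset.mul_sum]
    apply Finset.sum_congr rfl
    intro x hx
    simpa [nsmul_eq_mul, mul_assoc] using key x hx
  intro g
  unfold sh
  rw [Finset.sum_multiset_map_count, Finset.sum_multiset_map_count, ← hM]
  apply Finset.sum_congr rfl
  intro x hx
  have hW1' : sW m S β c1 X1 ≠ 0 := ne_of_gt hW1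
  simp only [nsmul_eq_mul]
  rw [hW]
  have hkey := key x hx
  field_simp
  linear_combination (-(g x)) * hkey

end SAT
end

section
/- Necessity of equal underlying sets (contractive). Fix m, S and β with 0 < β ≤ 1, central features c1, c2 : F, and nonempty finite multisets X1, X2 over F. If for every g : F → ℝ, h(g; c1, X1) = h(g; c2, X2), then M(X1) = M(X2). -/
namespace SAT

variable {F : Type*}

lemma cw_pos (m S : F → F → ℝ) (β : ℝ) (c x : F) : 0 < cw m S β c x :=
  mul_pos (Real.exp_pos _) (Real.exp_pos _)

lemma cW_pos (m S : F → F → ℝ) (β : ℝ) (c : F) (X : Multiset F) (hX : X ≠ 0) :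
    0 < cW m S β c X := by
  obtain ⟨a, ha⟩ := Multiset.exists_mem_of_ne_zero hX
  obtain ⟨Y, rfl⟩ := Multiset.exists_cons_of_mem ha
  unfold cW
  rw [Multiset.map_cons, Multiset.sum_cons]
  have h1 : 0 < cw m S β c a := cw_pos m S β c a
  have h2 : 0 ≤ (Y.map fun y => cw m S β c y).sum := by
    apply Multiset.sum_nonneg
    intro z hz
    obtain ⟨y, _, rfl⟩ := Multiset.mem_map.mp hz
    exact (cw_pos m S β c y).le
  linarith

lemma mem_iff_ch_pos [DecidableEq F] (m S : F → F → ℝ) (β : ℝ) (c x : F)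
    (X : Multiset F) (hX : X ≠ 0) :
    x ∈ X ↔ 0 < ch m S β (fun y => if y = x then 1 else 0) c X := by
  have hW := cW_pos m S β c X hX
  constructor
  · intro hx
    obtain ⟨Y, rfl⟩ := Multiset.exists_cons_of_mem hx
    unfold ch
    rw [Multiset.map_cons, Multiset.sum_cons]
    have h1 : 0 < cw m S β c x / cW m S β c (x ::ₘ Y) * (if x = x then (1:ℝ) else 0) := by
      rw [if_pos rfl, mul_one]
      exact div_pos (cw_pos m S β c x) hW
    have h2 : 0 ≤ (Y.map fun y => cw m S β c y / cW m S β c (x ::ₘ Y) *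
        (if y = x then (1:ℝ) else 0)).sum := by
      apply Multiset.sum_nonneg
      intro z hz
      obtain ⟨y, _, rfl⟩ := Multiset.mem_map.mp hz
      by_cases h : y = x <;> simp [h]
      exact (div_pos (cw_pos m S β c x) hW).le
    exact add_pos_of_pos_of_nonneg h1 h2
  · intro hpos
    by_contra hx
    have : ch m S β (fun y => if y = x then 1 else 0) c X = 0 := by
      unfold ch
      apply Multiset.sum_eq_zero
      intro z hz
      obtain ⟨y, hy, rfl⟩ := Multiset.mem_map.mp hz
      have : y ≠ x := fun h => hx (h ▸ hy)
      simp [this]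
    linarith

theorem contractive_necessity_toFinset_eq [DecidableEq F]
    (m S : F → F → ℝ) (β : ℝ) (hβ0 : 0 < β) (hβ1 : β ≤ 1)
    (c1 c2 : F) (X1 X2 : Multiset F) (hX1 : X1 ≠ 0) (hX2 : X2 ≠ 0)
    (hagg : ∀ g : F → ℝ, ch m S β g c1 X1 = ch m S β g c2 X2) :
    X1.toFinset = X2.toFinset := by
  ext x
  simp only [Multiset.mem_toFinset]
  rw [mem_iff_ch_pos m S β c1 x X1 hX1, mem_iff_ch_pos m S β c2 x X2 hX2,
    hagg (fun y => if y = x then 1 else 0)]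

end SAT
end

section
/- Necessity of equal underlying sets (subtractive). Fix m, S and β with 0 < β ≤ 1, central features c1, c2 : F, and nonempty finite multisets X1, X2 over F; assume the subtractive weights are strictly positive, i.e. w(c1,x;X1) > 0 for every x ∈ M(X1) and w(c2,x;X2) > 0 for every x ∈ M(X2). If for every g : F → ℝ, h(g; c1, X1) = h(g; c2, X2), then M(X1) = M(X2). -/
namespace SAT

variable {F : Type*}

lemma sW_pos' [DecidableEq F] (m S : F → F → ℝ) (β : ℝ) (c : F) (X : Multiset F)
    (hX : X ≠ 0) (hw : ∀ x ∈ X.toFinset, 0 < sw m S β c X x) :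
    0 < sW m S β c X := by
  unfold sW
  rw [Finset.sum_multiset_map_count]
  apply Finset.sum_pos
  · intro y hy
    have hc : 0 < X.count y := Multiset.count_pos.mpr (Multiset.mem_toFinset.mp hy)
    have := hw y hy
    positivity
  · obtain ⟨a, ha⟩ := Multiset.exists_mem_of_ne_zero hX
    exact ⟨a, Multiset.mem_toFinset.mpr ha⟩

lemma sh_ind [DecidableEq F] (m S : F → F → ℝ) (β : ℝ) (c : F) (X : Multiset F) (x : F) :
    sh m S β (fun y => if y = x then (1:ℝ) else 0) c X
      = if x ∈ X.toFinset then (X.count x : ℝ) * (sw m S β c X x / sW m S β c X) else 0 := by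
  unfold sh
  rw [Finset.sum_multiset_map_count]
  rw [Finset.sum_eq_single x]
  · by_cases hx : x ∈ X.toFinset
    · simp [hx, nsmul_eq_mul]
    · simp [hx, Multiset.count_eq_zero.mpr (fun h => hx (Multiset.mem_toFinset.mpr h))]
  · intro b _ hb
    simp [hb]
  · intro hx
    simp [hx, Multiset.count_eq_zero.mpr (fun h => hx (Multiset.mem_toFinset.mpr h))]

lemma mem_iff_sh_pos [DecidableEq F] (m S : F → F → ℝ) (β : ℝ) (c : F) (X : Multiset F)
    (hX : X ≠ 0) (hw : ∀ y ∈ X.toFinset, 0 < sw m S β c X y) (x : F) :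
    x ∈ X.toFinset ↔ 0 < sh m S β (fun y => if y = x then (1:ℝ) else 0) c X := by
  rw [sh_ind]
  constructor
  · intro hx
    rw [if_pos hx]
    have hc : 0 < X.count x := Multiset.count_pos.mpr (Multiset.mem_toFinset.mp hx)
    have h1 := hw x hx
    have h2 := sW_pos' m S β c X hX hw
    positivity
  · intro hpos
    by_contra hx
    rw [if_neg hx] at hpos
    exact lt_irrefl 0 hpos

theorem subtractive_necessity_toFinset_eq [DecidableEq F]
    (m S : F → F → ℝ) (β : ℝ) (hβ0 : 0 < β) (hβ1 : β ≤ 1)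
    (c1 c2 : F) (X1 X2 : Multiset F) (hX1 : X1 ≠ 0) (hX2 : X2 ≠ 0)
    (hw1 : ∀ x ∈ X1.toFinset, 0 < sw m S β c1 X1 x)
    (hw2 : ∀ x ∈ X2.toFinset, 0 < sw m S β c2 X2 x)
    (hagg : ∀ g : F → ℝ, sh m S β g c1 X1 = sh m S β g c2 X2) :
    X1.toFinset = X2.toFinset := by
  ext x
  rw [mem_iff_sh_pos m S β c1 X1 hX1 hw1 x, mem_iff_sh_pos m S β c2 X2 hX2 hw2 x,
    hagg (fun y => if y = x then (1:ℝ) else 0)]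

end SAT
end

section
/- Necessity of the proportionality constant (contractive). Fix m, S and β with 0 < β ≤ 1, a common central feature c : F (i.e. c1 = c2 = c), and nonempty finite multisets X1, X2 over F. If for every g : F → ℝ, h(g; c, X1) = h(g; c, X2), then M(X1) = M(X2) and there exists a real q > 0 such that for every x ∈ M(X1), q · μ_{X1}(x) · exp(−β·S(c, x)) = μ_{X2}(x) · exp(−β·S(c, x)). -/
namespace SAT

variable {F : Type*}

lemma sum_map_ite [DecidableEq F] (X : Multiset F) (x : F) (a : ℝ) :
    (X.map (fun y => if y = x then a else 0)).sum = (X.count x : ℝ) * a := by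
  induction X using Multiset.induction_on with
  | empty => simp
  | cons b X ih =>
    simp only [Multiset.map_cons, Multiset.sum_cons, ih, Multiset.count_cons]
    by_cases h : b = x
    · simp [h]; ring
    · simp only [if_neg h]
      rw [if_neg (fun hh => h hh.symm)]
      push_cast; ring

lemma ch_indicator [DecidableEq F] (m S : F → F → ℝ) (β : ℝ) (c x : F) (X : Multiset F) :
    ch m S β (fun y => if y = x then 1 else 0) c X =
      (X.count x : ℝ) * (cw m S β c x / cW m S β c X) := by
  unfold ch
  rw [show (fun y => cw m S β c y / cW m S β c X * (if y = x then (1:ℝ) else 0)) =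
      (fun y => if y = x then cw m S β c x / cW m S β c X else 0) from ?_,
    sum_map_ite]
  funext y
  by_cases h : y = x <;> simp [h]

theorem contractive_necessity_proportionality [DecidableEq F]
    (m S : F → F → ℝ) (β : ℝ) (hβ0 : 0 < β) (hβ1 : β ≤ 1)
    (c : F) (X1 X2 : Multiset F) (hX1 : X1 ≠ 0) (hX2 : X2 ≠ 0)
    (hagg : ∀ g : F → ℝ, ch m S β g c X1 = ch m S β g c X2) :
    X1.toFinset = X2.toFinset ∧
      ∃ q : ℝ, 0 < q ∧ ∀ x ∈ X1.toFinset,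
        q * (X1.count x : ℝ) * Real.exp (-β * S c x) =
          (X2.count x : ℝ) * Real.exp (-β * S c x) := by
  have hW1 := cW_pos m S β c X1 hX1
  have hW2 := cW_pos m S β c X2 hX2
  set W1 := cW m S β c X1
  set W2 := cW m S β c X2
  have key : ∀ x : F, (W2 / W1) * (X1.count x : ℝ) = (X2.count x : ℝ) := by
    intro x
    have h := hagg (fun y => if y = x then 1 else 0)
    rw [ch_indicator, ch_indicator] at h
    have hw := cw_pos m S β c x
    field_simp at h ⊢
    change _ / W1 = _ / W2 at h
    rw [div_eq_div_iff (ne_of_gt hW1) (ne_of_gt hW2)] at h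
    nlinarith [h]
  constructor
  · ext x
    simp only [Multiset.mem_toFinset, ← Multiset.count_pos]
    constructor
    · intro h
      have := key x
      have h1 : (0:ℝ) < (X1.count x : ℝ) := by exact_mod_cast h
      have : (0:ℝ) < (X2.count x : ℝ) := by
        rw [← key x]; positivity
      exact_mod_cast this
    · intro h
      have h2 : (0:ℝ) < (X2.count x : ℝ) := by exact_mod_cast h
      rw [← key x] at h2
      by_contra hc
      simp only [not_lt, Nat.le_zero] at hc
      rw [hc] at h2; simp at h2
  · exact ⟨W2 / W1, by positivity, fun x _ => by rw [mul_assoc, ← mul_assoc, key x]⟩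

end SAT
end

section
/- Difference identity for the augmented contractive aggregator (from the proof of Corollary 1). Fix m, S and β with 0 < β ≤ 1, a common central feature c : F, and nonempty finite multisets X1, X2 over F such that M(X1) = M(X2) and there exists a real q > 0 with q · μ_{X1}(x) · exp(−β·S(c,x)) = μ_{X2}(x) · exp(−β·S(c,x)) for every x ∈ M(X1). Then for every g : F → ℝ and every real ε, h_ε(g;c,X1) − h_ε(g;c,X2) = ε · (1/card(X1) − 1/card(X2)) · g(c). -/
namespace SAT

variable {F : Type*}

/-- Augmented contractive aggregation `h_ε(g;c,X) = h(g;c,X) + (ε/card X) * g(c)`. -/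
noncomputable def chE (m S : F → F → ℝ) (β ε : ℝ) (g : F → ℝ) (c : F) (X : Multiset F) : ℝ :=
  ch m S β g c X + ε / (Multiset.card X : ℝ) * g c

theorem contractive_augmented_difference [DecidableEq F]
    (m S : F → F → ℝ) (β : ℝ) (hβ0 : 0 < β) (hβ1 : β ≤ 1)
    (c : F) (X1 X2 : Multiset F) (hX1 : X1 ≠ 0) (hX2 : X2 ≠ 0)
    (hM : X1.toFinset = X2.toFinset)
    (hq : ∃ q : ℝ, 0 < q ∧ ∀ x ∈ X1.toFinset,
      q * (X1.count x : ℝ) * Real.exp (-β * S c x) =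
        (X2.count x : ℝ) * Real.exp (-β * S c x)) :
    ∀ (g : F → ℝ) (ε : ℝ),
      chE m S β ε g c X1 - chE m S β ε g c X2 =
        ε * (1 / (Multiset.card X1 : ℝ) - 1 / (Multiset.card X2 : ℝ)) * g c := by
  intro g ε
  obtain ⟨q, hq0, hqe⟩ := hq
  have hcount : ∀ x ∈ X1.toFinset, (X2.count x : ℝ) = q * (X1.count x : ℝ) := by
    intro x hx
    have he : Real.exp (-β * S c x) ≠ 0 := (Real.exp_pos _).ne'
    have := hqe x hx
    field_simp at this
    linarith [this]
  have hsum : ∀ (f : F → ℝ) (X : Multiset F),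
      (X.map f).sum = ∑ x ∈ X.toFinset, (X.count x : ℝ) * f x := by
    intro f X
    rw [Finset.sum_multiset_map_count]
    simp [nsmul_eq_mul]
  have hcwpos : ∀ x, 0 < cw m S β c x := fun x =>
    mul_pos (Real.exp_pos _) (Real.exp_pos _)
  have hW1pos : 0 < cW m S β c X1 := by
    rw [cW, hsum]
    apply Finset.sum_pos
    · intro x hx
      have h1 : (0:ℝ) < X1.count x := by
        exact_mod_cast Multiset.count_pos.mpr (Multiset.mem_toFinset.mp hx)
      exact mul_pos h1 (hcwpos x)
    · simpa [Finset.nonempty_iff_ne_empty, Multiset.toFinset_eq_empty] using hX1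
  have hW2 : cW m S β c X2 = q * cW m S β c X1 := by
    rw [cW, cW, hsum, hsum, ← hM, Finset.mul_sum]
    refine Finset.sum_congr rfl fun x hx => ?_
    rw [hcount x hx]; ring
  have hch : ch m S β g c X1 = ch m S β g c X2 := by
    rw [ch, ch, hsum, hsum, ← hM]
    refine Finset.sum_congr rfl fun x hx => ?_
    rw [hcount x hx, hW2]
    field_simp
  rw [chE, chE, hch]
  ring

end SAT
end

section
/- Corollary 1, contractive version: the augmented aggregator distinguishes multisets that the plain contractive aggregator cannot. Fix m, S and β with 0 < β ≤ 1, a common central feature c : F, and nonempty finite multisets X1, X2 over F such that M(X1) = M(X2) and there exists a real q > 0 with q · μ_{X1}(x) · exp(−β·S(c,x)) = μ_{X2}(x) · exp(−β·S(c,x)) for every x ∈ M(X1) (so that h(g;c,X1) = h(g;c,X2) for every g). If card(X1) ≠ card(X2), then for every ε > 0 and every g : F → ℝ with g(c) ≠ 0, h_ε(g;c,X1) ≠ h_ε(g;c,X2). -/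
namespace SAT

variable {F : Type*}

theorem contractive_augmented_distinguishes [DecidableEq F]
    (m S : F → F → ℝ) (β : ℝ) (hβ0 : 0 < β) (hβ1 : β ≤ 1)
    (c : F) (X1 X2 : Multiset F) (hX1 : X1 ≠ 0) (hX2 : X2 ≠ 0)
    (hM : X1.toFinset = X2.toFinset)
    (hq : ∃ q : ℝ, 0 < q ∧ ∀ x ∈ X1.toFinset,
      q * (X1.count x : ℝ) * Real.exp (-β * S c x) =
        (X2.count x : ℝ) * Real.exp (-β * S c x))
    (hcard : Multiset.card X1 ≠ Multiset.card X2) :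
    ∀ ε : ℝ, 0 < ε → ∀ g : F → ℝ, g c ≠ 0 →
      chE m S β ε g c X1 ≠ chE m S β ε g c X2 := by
  obtain ⟨q, hq0, hqc⟩ := hq
  have hcnt : ∀ x, (X2.count x : ℝ) = q * (X1.count x : ℝ) := by
    intro x
    by_cases hx : x ∈ X1.toFinset
    · have h := hqc x hx
      have := mul_right_cancel₀ (Real.exp_ne_zero (-β * S c x)) h
      linarith
    · have h1 : X1.count x = 0 := by
        rwa [Multiset.count_eq_zero, ← Multiset.mem_toFinset]
      have h2 : X2.count x = 0 := by
        rw [Multiset.count_eq_zero, ← Multiset.mem_toFinset, ← hM]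
        exact hx
      simp [h1, h2]
  have hWpos : 0 < cW m S β c X1 := by
    unfold cW
    rw [Finset.sum_multiset_map_count]
    apply Finset.sum_pos
    · intro x hx
      have hc : 0 < X1.count x := Multiset.count_pos.mpr (Multiset.mem_toFinset.mp hx)
      have : 0 < cw m S β c x := mul_pos (Real.exp_pos _) (Real.exp_pos _)
      calc (0:ℝ) < (X1.count x : ℝ) * cw m S β c x := by positivity
        _ = X1.count x • cw m S β c x := (nsmul_eq_mul _ _).symm
    · obtain ⟨y, hy⟩ := Multiset.exists_mem_of_ne_zero hX1
      exact ⟨y, Multiset.mem_toFinset.mpr hy⟩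
  have hW2 : cW m S β c X2 = q * cW m S β c X1 := by
    unfold cW
    rw [Finset.sum_multiset_map_count, Finset.sum_multiset_map_count, ← hM,
      Finset.mul_sum]
    refine Finset.sum_congr rfl fun x _ => ?_
    rw [nsmul_eq_mul, nsmul_eq_mul, hcnt x]
    ring
  intro ε hε g hg heq
  have hch : ch m S β g c X1 = ch m S β g c X2 := by
    unfold ch
    rw [Finset.sum_multiset_map_count, Finset.sum_multiset_map_count, ← hM]
    refine Finset.sum_congr rfl fun x _ => ?_
    rw [nsmul_eq_mul, nsmul_eq_mul, hcnt x, hW2]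
    field_simp
  have h1 : 0 < (Multiset.card X1 : ℝ) := by
    exact_mod_cast Multiset.card_pos.mpr hX1
  have h2 : 0 < (Multiset.card X2 : ℝ) := by
    exact_mod_cast Multiset.card_pos.mpr hX2
  unfold chE at heq
  rw [hch] at heq
  have : ε / (Multiset.card X1 : ℝ) = ε / (Multiset.card X2 : ℝ) :=
    mul_right_cancel₀ hg (by linarith)
  have : (Multiset.card X1 : ℝ) = (Multiset.card X2 : ℝ) := by
    field_simp at this
    linarith
  exact hcard (by exact_mod_cast this)

end SAT
end

section
/- Difference identity for the augmented subtractive aggregator (from the proof of Corollary 1). Fix m, S and β with 0 < β ≤ 1, a common central feature c : F, and nonempty finite multisets X1, X2 over F with strictly positive total subtractive weights W(c,X1) and W(c,X2), such that M(X1) = M(X2) and there exists a real q > 0 with q · μ_{X1}(x) · (E(c,X1) − β·exp(S(c,x))) = μ_{X2}(x) · (E(c,X2) − β·exp(S(c,x))) for every x ∈ M(X1). Then for every g : F → ℝ and every real ε, h_ε(g;c,X1) − h_ε(g;c,X2) = ε · (1/card(X1) − 1/card(X2)) · g(c). -/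
namespace SAT

variable {F : Type*}

/-- Augmented subtractive aggregation `h_ε(g;c,X) = h(g;c,X) + (ε/card X) * g(c)`. -/
noncomputable def shE (m S : F → F → ℝ) (β ε : ℝ) (g : F → ℝ) (c : F) (X : Multiset F) : ℝ :=
  sh m S β g c X + ε / (Multiset.card X : ℝ) * g c

lemma sE_pos (S : F → F → ℝ) (c : F) (X : Multiset F) (hX : X ≠ 0) :
    0 < sE S c X := by
  obtain ⟨a, ha⟩ := Multiset.exists_mem_of_ne_zero hX
  have : sE S c X = (X.map (fun y => Real.exp (S c y))).sum := rfl
  rw [this]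
  have h1 : Real.exp (S c a) ∈ X.map (fun y => Real.exp (S c y)) :=
    Multiset.mem_map_of_mem _ ha
  calc (0:ℝ) < Real.exp (S c a) := Real.exp_pos _
    _ ≤ _ := Multiset.single_le_sum (fun x hx => by
        obtain ⟨y, _, rfl⟩ := Multiset.mem_map.mp hx
        exact (Real.exp_pos _).le) _ h1

theorem subtractive_augmented_difference [DecidableEq F]
    (m S : F → F → ℝ) (β : ℝ) (hβ0 : 0 < β) (hβ1 : β ≤ 1)
    (c : F) (X1 X2 : Multiset F) (hX1 : X1 ≠ 0) (hX2 : X2 ≠ 0)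
    (hW1 : 0 < sW m S β c X1) (hW2 : 0 < sW m S β c X2)
    (hM : X1.toFinset = X2.toFinset)
    (hq : ∃ q : ℝ, 0 < q ∧ ∀ x ∈ X1.toFinset,
      q * (X1.count x : ℝ) * (sE S c X1 - β * Real.exp (S c x)) =
        (X2.count x : ℝ) * (sE S c X2 - β * Real.exp (S c x))) :
    ∀ (g : F → ℝ) (ε : ℝ),
      shE m S β ε g c X1 - shE m S β ε g c X2 =
        ε * (1 / (Multiset.card X1 : ℝ) - 1 / (Multiset.card X2 : ℝ)) * g c := by
  obtain ⟨q, hq0, hqe⟩ := hq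
  intro g ε
  have hE1 : 0 < sE S c X1 := sE_pos S c X1 hX1
  have hE2 : 0 < sE S c X2 := sE_pos S c X2 hX2
  set k : ℝ := sE S c X2 / (q * sE S c X1) with hk
  have hk0 : 0 < k := div_pos hE2 (mul_pos hq0 hE1)
  have key : ∀ x ∈ X1.toFinset,
      (X1.count x : ℝ) * sw m S β c X1 x = k * ((X2.count x : ℝ) * sw m S β c X2 x) := by
    intro x hx
    have h := hqe x hx
    unfold sw
    rw [hk]
    field_simp
    linear_combination h
  have hWeq : sW m S β c X1 = k * sW m S β c X2 := by
    rw [sW, sW, Finset.sum_multiset_map_count, Finset.sum_multiset_map_count, hM,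
      Finset.mul_sum]
    apply Finset.sum_congr rfl
    intro x hx
    have hkey := key x (hM ▸ hx)
    rw [nsmul_eq_mul, nsmul_eq_mul]
    linarith [hkey]
  have hsh : sh m S β g c X1 = sh m S β g c X2 := by
    rw [sh, sh, Finset.sum_multiset_map_count, Finset.sum_multiset_map_count, hM]
    apply Finset.sum_congr rfl
    intro x hx
    have hkey := key x (hM ▸ hx)
    rw [nsmul_eq_mul, nsmul_eq_mul, hWeq]
    have hW2' : (sW m S β c X2) ≠ 0 := hW2.ne'
    calc (X1.count x : ℝ) * (sw m S β c X1 x / (k * sW m S β c X2) * g x)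
        = ((X1.count x : ℝ) * sw m S β c X1 x) * g x / (k * sW m S β c X2) := by ring
      _ = (k * ((X2.count x : ℝ) * sw m S β c X2 x)) * g x / (k * sW m S β c X2) := by
          rw [hkey]
      _ = (X2.count x : ℝ) * (sw m S β c X2 x / sW m S β c X2 * g x) := by
          field_simp
  simp only [shE, hsh]
  ring

end SAT
end

section
/- Corollary 1, subtractive version: the augmented aggregator distinguishes multisets that the plain subtractive aggregator cannot. Fix m, S and β with 0 < β ≤ 1, a common central feature c : F, and nonempty finite multisets X1, X2 over F with strictly positive total subtractive weights W(c,X1) and W(c,X2), such that M(X1) = M(X2) and there exists a real q > 0 with q · μ_{X1}(x) · (E(c,X1) − β·exp(S(c,x))) = μ_{X2}(x) · (E(c,X2) − β·exp(S(c,x))) for every x ∈ M(X1) (so that h(g;c,X1) = h(g;c,X2) for every g). If card(X1) ≠ card(X2), then for every ε > 0 and every g : F → ℝ with g(c) ≠ 0, h_ε(g;c,X1) ≠ h_ε(g;c,X2). -/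
namespace SAT

variable {F : Type*}

theorem subtractive_augmented_distinguishes [DecidableEq F]
    (m S : F → F → ℝ) (β : ℝ) (hβ0 : 0 < β) (hβ1 : β ≤ 1)
    (c : F) (X1 X2 : Multiset F) (hX1 : X1 ≠ 0) (hX2 : X2 ≠ 0)
    (hW1 : 0 < sW m S β c X1) (hW2 : 0 < sW m S β c X2)
    (hM : X1.toFinset = X2.toFinset)
    (hq : ∃ q : ℝ, 0 < q ∧ ∀ x ∈ X1.toFinset,
      q * (X1.count x : ℝ) * (sE S c X1 - β * Real.exp (S c x)) =
        (X2.count x : ℝ) * (sE S c X2 - β * Real.exp (S c x)))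
    (hcard : Multiset.card X1 ≠ Multiset.card X2) :
    ∀ ε : ℝ, 0 < ε → ∀ g : F → ℝ, g c ≠ 0 →
      shE m S β ε g c X1 ≠ shE m S β ε g c X2 := by
  intro ε hε g hg
  obtain ⟨q, hq0, hqx⟩ := hq
  have hE : ∀ X : Multiset F, X ≠ 0 → 0 < sE S c X := by
    intro X hX
    rw [sE, Finset.sum_multiset_map_count]
    apply Finset.sum_pos
    · intro x hx
      rw [nsmul_eq_mul]
      have hcx : 0 < (X.count x : ℝ) := by
        exact_mod_cast Multiset.count_pos.mpr (Multiset.mem_toFinset.mp hx)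
      exact mul_pos hcx (Real.exp_pos _)
    · exact Multiset.toFinset_nonempty.mpr hX
  have hE1 : 0 < sE S c X1 := hE X1 hX1
  have hE2 : 0 < sE S c X2 := hE X2 hX2
  set C : ℝ := q * sE S c X1 / sE S c X2 with hC
  have hCne : C ≠ 0 := div_ne_zero (mul_ne_zero hq0.ne' hE1.ne') hE2.ne'
  have key : ∀ x ∈ X1.toFinset,
      (X2.count x : ℝ) * sw m S β c X2 x = C * ((X1.count x : ℝ) * sw m S β c X1 x) := by
    intro x hx
    have h := hqx x hx
    rw [sw, sw, hC]
    field_simp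
    linear_combination -h
  have hWsum : sW m S β c X2 = C * sW m S β c X1 := by
    rw [sW, sW, Finset.sum_multiset_map_count, Finset.sum_multiset_map_count, ← hM,
      Finset.mul_sum]
    refine Finset.sum_congr rfl fun x hx => ?_
    rw [nsmul_eq_mul, nsmul_eq_mul]
    exact key x hx
  have hsh : sh m S β g c X2 = sh m S β g c X1 := by
    rw [sh, sh, Finset.sum_multiset_map_count, Finset.sum_multiset_map_count, ← hM]
    refine Finset.sum_congr rfl fun x hx => ?_
    rw [nsmul_eq_mul, nsmul_eq_mul, hWsum]
    have hk := key x hx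
    have expand : (X2.count x : ℝ) * (sw m S β c X2 x / (C * sW m S β c X1) * g x)
        = ((X2.count x : ℝ) * sw m S β c X2 x) * g x / (C * sW m S β c X1) := by ring
    rw [expand, hk]
    field_simp
  intro heq
  rw [shE, shE, hsh] at heq
  have hn1 : (0:ℝ) < (Multiset.card X1 : ℝ) := by
    exact_mod_cast Multiset.card_pos.mpr hX1
  have hn2 : (0:ℝ) < (Multiset.card X2 : ℝ) := by
    exact_mod_cast Multiset.card_pos.mpr hX2
  have h2 : ε / (Multiset.card X1 : ℝ) * g c = ε / (Multiset.card X2 : ℝ) * g c := by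
    linarith [heq]
  have h3 : (Multiset.card X1 : ℝ) = (Multiset.card X2 : ℝ) := by
    have hεg : ε * g c ≠ 0 := mul_ne_zero hε.ne' hg
    rw [div_mul_eq_mul_div, div_mul_eq_mul_div, div_eq_div_iff hn1.ne' hn2.ne'] at h2
    exact (mul_left_cancel₀ hεg h2).symm
  exact hcard (by exact_mod_cast h3)

end SAT
end
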